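/- (Gap analysis, Case 8: R12 ≤ R21, R13 ≤ R31, R23 ≤ R32.) Suppose the nonnegative rate tuple lies in C̲'_g and additionally R12 ≤ R21, R13 ≤ R31, R23 ≤ R32. Define α32^b = (2^{2R23+1}−1)/(2h3²P), α31^b = 2^{2R23+1}(2^{2R13+1}−1)/(2h3²P), α32^u = 2^{2R13+2R23+2}(2^{2(R32−R23)}−1)/(h3²P), α31^u = 2^{2R13+2R32+2}(2^{2(R31−R13)}−1)/(h3²P), α21^b = 2^{2R32+2R31+2}(2^{2R12+1}−1)/(2h2²P), α21^u = 2^{2R12+2R31+2R32+3}(2^{2(R21−R12)}−1)/(h2²P), and α23^b = (h3²/h2²)α32^b, α13^b = (h3²/h1²)α31^b, α12^b = (h2²/h1²)α21^b. Then α31^b+α32^b+α31^u+α32^u ≤ 1, α21^b+α23^b+α21^u ≤ 1, α12^b+α13^b ≤ 1, and (2^{2(R13+R23)}−1)/(h3²P) + 2^{2(R13+R23)}(2^{2(R32−R23+R12)}−1)/(h2²P) + 2^{2(R13+R32+R12)}(2^{2(R21−R12+R31−R13)}−1)/(h1²P) ≤ 1. -/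

import Mathlib

noncomputable def Cg (x : ℝ) : ℝ := (1 / 2) * Real.logb 2 (1 + x)

/-!
Put `xᵢⱼ = 2 ^ (2 Rᵢⱼ)`, so `xᵢⱼ ≥ 1` for nonnegative rates. A rate constraint `R ≤ C(s) - c`
becomes `4 ^ c · ∏ xᵢⱼ ≤ 1 + s`, and each power-allocation parameter is a difference of two
monomials in the `xᵢⱼ` divided by an SNR. Over the common SNR of each user's sum these differences
telescope to a single monomial, which one rate constraint bounds; the relay's three terms are
bounded by `1/16`, `1/32`, `1/32` separately. The SNRs are compared through `h₃² ≤ h₂² ≤ h₁²`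
and `(|h₂| + |h₃|)² ≤ 4 h₂²`.
-/

open Real

lemma one_le_two_rpow_two_mul {R : ℝ} (hR : 0 ≤ R) : 1 ≤ (2 : ℝ) ^ (2 * R) :=
  one_le_rpow one_le_two (by positivity)

lemma two_rpow_two_mul_le_of_le_Cg {R x : ℝ} (hx : 0 < 1 + x) (h : R ≤ Cg x) :
    (2 : ℝ) ^ (2 * R) ≤ 1 + x :=
  calc (2 : ℝ) ^ (2 * R) ≤ 2 ^ logb 2 (1 + x) := by
        apply rpow_le_rpow_of_exponent_le one_le_two
        unfold Cg at h
        linarith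
    _ = 1 + x := rpow_logb two_pos (by norm_num) hx

lemma abs_add_abs_sq_le_four_mul_sq {a b : ℝ} (h : b ^ 2 ≤ a ^ 2) :
    (|a| + |b|) ^ 2 ≤ 4 * a ^ 2 := by
  have hba : |b| ≤ |a| := sq_le_sq.1 h
  nlinarith [abs_nonneg b, sq_abs a]

section PowerAllocation

variable {P h1 h2 h3 R12 R13 R21 R23 R31 R32 : ℝ}

lemma user3_power_le_one (hP : 0 < P) (hh3 : 0 < h3 ^ 2)
    (hG1 : R31 + R32 ≤ Cg (h3 ^ 2 * P) - 2) :
    (2:ℝ) ^ (2 * R23 + 1) * ((2:ℝ) ^ (2 * R13 + 1) - 1) / (2 * h3 ^ 2 * P)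
      + ((2:ℝ) ^ (2 * R23 + 1) - 1) / (2 * h3 ^ 2 * P)
      + (2:ℝ) ^ (2 * R13 + 2 * R32 + 2) * ((2:ℝ) ^ (2 * (R31 - R13)) - 1) / (h3 ^ 2 * P)
      + (2:ℝ) ^ (2 * R13 + 2 * R23 + 2) * ((2:ℝ) ^ (2 * (R32 - R23)) - 1) / (h3 ^ 2 * P)
      ≤ 1 := by
  have hs : 0 < h3 ^ 2 * P := by positivity
  have hrate1 := two_rpow_two_mul_le_of_le_Cg (by linarith)
    (show R31 + R32 + 2 ≤ Cg (h3 ^ 2 * P) by linarith)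
  have hx13 : 0 < (2:ℝ) ^ (2 * R13) := by positivity
  have hx23 : 0 < (2:ℝ) ^ (2 * R23) := by positivity
  simp only [mul_add, mul_sub, rpow_add two_pos, rpow_sub two_pos, rpow_one] at hrate1 ⊢
  norm_num at hrate1 ⊢
  set x13 := (2:ℝ) ^ (2 * R13)
  set x23 := (2:ℝ) ^ (2 * R23)
  set x31 := (2:ℝ) ^ (2 * R31)
  set x32 := (2:ℝ) ^ (2 * R32)
  calc _ = (8 * x31 * x32 - 4 * x13 * x23 - 1) / (2 * (h3 ^ 2 * P)) := by
        field_simp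
        ring
    _ ≤ 1 := by
        rw [div_le_one (by positivity)]
        linarith [mul_pos hx13 hx23]

lemma user2_power_le_one (hP : 0 < P) (hh23 : h3 ^ 2 ≤ h2 ^ 2) (hh3 : 0 < h3 ^ 2)
    (hr21 : 0 ≤ R21) (hr31 : 0 ≤ R31)
    (hG7 : R21 + R31 + R23 ≤ Cg ((|h2| + |h3|) ^ 2 * P) - 7 / 2)
    (hG8 : R21 + R31 + R32 ≤ Cg ((|h2| + |h3|) ^ 2 * P) - 7 / 2) :
    (2:ℝ) ^ (2 * R32 + 2 * R31 + 2) * ((2:ℝ) ^ (2 * R12 + 1) - 1) / (2 * h2 ^ 2 * P)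
      + h3 ^ 2 / h2 ^ 2 * (((2:ℝ) ^ (2 * R23 + 1) - 1) / (2 * h3 ^ 2 * P))
      + (2:ℝ) ^ (2 * R12 + 2 * R31 + 2 * R32 + 3) * ((2:ℝ) ^ (2 * (R21 - R12)) - 1) / (h2 ^ 2 * P)
      ≤ 1 := by
  have hh2 : 0 < h2 ^ 2 := hh3.trans_le hh23
  have h2ne : h2 ≠ 0 := (pow_ne_zero_iff two_ne_zero).1 hh2.ne'
  have h3ne : h3 ≠ 0 := (pow_ne_zero_iff two_ne_zero).1 hh3.ne'
  have hc := mul_le_mul_of_nonneg_right (abs_add_abs_sq_le_four_mul_sq hh23) hP.le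
  have hc0 : 0 < 1 + (|h2| + |h3|) ^ 2 * P := by positivity
  have hrate7 := two_rpow_two_mul_le_of_le_Cg hc0
    (show R21 + R31 + R23 + 7 / 2 ≤ Cg ((|h2| + |h3|) ^ 2 * P) by linarith)
  have hrate8 := two_rpow_two_mul_le_of_le_Cg hc0
    (show R21 + R31 + R32 + 7 / 2 ≤ Cg ((|h2| + |h3|) ^ 2 * P) by linarith)
  have hx12 : 0 < (2:ℝ) ^ (2 * R12) := by positivity
  have hx23 : 0 < (2:ℝ) ^ (2 * R23) := by positivity
  have hx31x32 : 0 < (2:ℝ) ^ (2 * R31) * 2 ^ (2 * R32) := by positivity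
  have hx21x31 := one_le_mul_of_one_le_of_one_le
    (one_le_two_rpow_two_mul hr21) (one_le_two_rpow_two_mul hr31)
  simp only [mul_add, mul_sub, rpow_add two_pos, rpow_sub two_pos, rpow_one] at hrate7 hrate8 ⊢
  norm_num at hrate7 hrate8 ⊢
  set x12 := (2:ℝ) ^ (2 * R12)
  set x21 := (2:ℝ) ^ (2 * R21)
  set x23 := (2:ℝ) ^ (2 * R23)
  set x31 := (2:ℝ) ^ (2 * R31)
  set x32 := (2:ℝ) ^ (2 * R32)
  have hx23_le : x23 ≤ x21 * x31 * x23 := le_mul_of_one_le_left hx23.le hx21x31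
  calc _ = (16 * x21 * x31 * x32 - 8 * x12 * x31 * x32 - 4 * x31 * x32 + 2 * x23 - 1)
        / (2 * (h2 ^ 2 * P)) := by
        field_simp
        ring
    _ ≤ 1 := by
        rw [div_le_one (by positivity)]
        linarith [mul_pos hx12 hx31x32]

lemma user1_power_le_one (hP : 0 < P) (hh12 : h2 ^ 2 ≤ h1 ^ 2) (hh23 : h3 ^ 2 ≤ h2 ^ 2)
    (hh3 : 0 < h3 ^ 2) (hr31 : 0 ≤ R31) (hr32 : 0 ≤ R32)
    (hG2 : R13 + R23 ≤ Cg (h3 ^ 2 * P) - 2)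
    (hG5 : R12 + R31 + R32 ≤ Cg (h1 ^ 2 * P + h2 ^ 2 * P) - 3) :
    h2 ^ 2 / h1 ^ 2
        * ((2:ℝ) ^ (2 * R32 + 2 * R31 + 2) * ((2:ℝ) ^ (2 * R12 + 1) - 1) / (2 * h2 ^ 2 * P))
      + h3 ^ 2 / h1 ^ 2
        * ((2:ℝ) ^ (2 * R23 + 1) * ((2:ℝ) ^ (2 * R13 + 1) - 1) / (2 * h3 ^ 2 * P))
      ≤ 1 := by
  have hh2 : 0 < h2 ^ 2 := hh3.trans_le hh23
  have hh1 : 0 < h1 ^ 2 := hh2.trans_le hh12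
  have h2ne : h2 ≠ 0 := (pow_ne_zero_iff two_ne_zero).1 hh2.ne'
  have h3ne : h3 ≠ 0 := (pow_ne_zero_iff two_ne_zero).1 hh3.ne'
  have hs21 : h2 ^ 2 * P ≤ h1 ^ 2 * P := by gcongr
  have hs32 : h3 ^ 2 * P ≤ h2 ^ 2 * P := by gcongr
  have hs3 : 0 < h3 ^ 2 * P := by positivity
  have hrate2 := two_rpow_two_mul_le_of_le_Cg (by linarith)
    (show R13 + R23 + 2 ≤ Cg (h3 ^ 2 * P) by linarith)
  have hrate5 := two_rpow_two_mul_le_of_le_Cg (by linarith)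
    (show R12 + R31 + R32 + 3 ≤ Cg (h1 ^ 2 * P + h2 ^ 2 * P) by linarith)
  have hx23 : 0 < (2:ℝ) ^ (2 * R23) := by positivity
  have hx31x32 := one_le_mul_of_one_le_of_one_le
    (one_le_two_rpow_two_mul hr31) (one_le_two_rpow_two_mul hr32)
  simp only [mul_add, rpow_add two_pos, rpow_one] at hrate2 hrate5 ⊢
  norm_num at hrate2 hrate5 ⊢
  set x12 := (2:ℝ) ^ (2 * R12)
  set x13 := (2:ℝ) ^ (2 * R13)
  set x23 := (2:ℝ) ^ (2 * R23)
  set x31 := (2:ℝ) ^ (2 * R31)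
  set x32 := (2:ℝ) ^ (2 * R32)
  calc _ = (8 * x12 * x31 * x32 - 4 * x31 * x32 + 4 * x13 * x23 - 2 * x23)
        / (2 * (h1 ^ 2 * P)) := by
        field_simp
        ring
    _ ≤ 1 := by
        rw [div_le_one (by positivity)]
        linarith

lemma relay_power_le_one (hP : 0 < P) (hh12 : h2 ^ 2 ≤ h1 ^ 2) (hh23 : h3 ^ 2 ≤ h2 ^ 2)
    (hh3 : 0 < h3 ^ 2) (hr12 : 0 ≤ R12) (hr13 : 0 ≤ R13) (hr23 : 0 ≤ R23) (hr32 : 0 ≤ R32)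
    (hG2 : R13 + R23 ≤ Cg (h3 ^ 2 * P) - 2)
    (hG3 : R12 + R13 + R32 ≤ Cg (h2 ^ 2 * P + h3 ^ 2 * P) - 3)
    (hG8 : R21 + R31 + R32 ≤ Cg ((|h2| + |h3|) ^ 2 * P) - 7 / 2) :
    ((2:ℝ) ^ (2 * (R13 + R23)) - 1) / (h3 ^ 2 * P)
      + (2:ℝ) ^ (2 * (R13 + R23)) * ((2:ℝ) ^ (2 * (R32 - R23 + R12)) - 1) / (h2 ^ 2 * P)
      + (2:ℝ) ^ (2 * (R13 + R32 + R12)) * ((2:ℝ) ^ (2 * (R21 - R12 + R31 - R13)) - 1)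
        / (h1 ^ 2 * P) ≤ 1 := by
  have hh2 : 0 < h2 ^ 2 := hh3.trans_le hh23
  have hh1 : 0 < h1 ^ 2 := hh2.trans_le hh12
  have hs21 : h2 ^ 2 * P ≤ h1 ^ 2 * P := by gcongr
  have hs32 : h3 ^ 2 * P ≤ h2 ^ 2 * P := by gcongr
  have hs3 : 0 < h3 ^ 2 * P := by positivity
  have hc := mul_le_mul_of_nonneg_right (abs_add_abs_sq_le_four_mul_sq hh23) hP.le
  have hrate2 := two_rpow_two_mul_le_of_le_Cg (by linarith)
    (show R13 + R23 + 2 ≤ Cg (h3 ^ 2 * P) by linarith)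
  have hrate3 := two_rpow_two_mul_le_of_le_Cg (by linarith)
    (show R12 + R13 + R32 + 3 ≤ Cg (h2 ^ 2 * P + h3 ^ 2 * P) by linarith)
  have hrate8 := two_rpow_two_mul_le_of_le_Cg (by positivity)
    (show R21 + R31 + R32 + 7 / 2 ≤ Cg ((|h2| + |h3|) ^ 2 * P) by linarith)
  have h12 := one_le_two_rpow_two_mul hr12
  have h13 := one_le_two_rpow_two_mul hr13
  have h23 := one_le_two_rpow_two_mul hr23
  have h32 := one_le_two_rpow_two_mul hr32
  simp only [mul_add, mul_sub, rpow_add two_pos, rpow_sub two_pos] at hrate2 hrate3 hrate8 ⊢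
  norm_num at hrate2 hrate3 hrate8 ⊢
  set x12 := (2:ℝ) ^ (2 * R12)
  set x13 := (2:ℝ) ^ (2 * R13)
  set x21 := (2:ℝ) ^ (2 * R21)
  set x23 := (2:ℝ) ^ (2 * R23)
  set x31 := (2:ℝ) ^ (2 * R31)
  set x32 := (2:ℝ) ^ (2 * R32)
  have hx13x23 := one_le_mul_of_one_le_of_one_le h13 h23
  have hx12x13x32 := one_le_mul_of_one_le_of_one_le (one_le_mul_of_one_le_of_one_le h12 h13) h32
  have t3 : (x13 * x23 - 1) / (h3 ^ 2 * P) ≤ 1 / 16 := by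
    rw [div_le_iff₀ hs3]
    linarith
  have t2 : (x12 * x13 * x32 - x13 * x23) / (h2 ^ 2 * P) ≤ 1 / 32 := by
    rw [div_le_iff₀ (by positivity)]
    linarith
  have t1 : (x21 * x31 * x32 - x12 * x13 * x32) / (h1 ^ 2 * P) ≤ 1 / 32 := by
    rw [div_le_iff₀ (by positivity)]
    linarith
  calc _ = (x13 * x23 - 1) / (h3 ^ 2 * P) + (x12 * x13 * x32 - x13 * x23) / (h2 ^ 2 * P)
        + (x21 * x31 * x32 - x12 * x13 * x32) / (h1 ^ 2 * P) := by
        field_simp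
    _ ≤ 1 := by linarith

end PowerAllocation

theorem stmt_18_general
    (P h1 h2 h3 : ℝ) (hP : 0 < P)
    (hh12 : h2 ^ 2 ≤ h1 ^ 2) (hh23 : h3 ^ 2 ≤ h2 ^ 2) (hh3 : 0 < h3 ^ 2)
    (R12 R13 R21 R23 R31 R32 : ℝ)
    (hr12 : 0 ≤ R12) (hr13 : 0 ≤ R13) (hr21 : 0 ≤ R21)
    (hr23 : 0 ≤ R23) (hr31 : 0 ≤ R31) (hr32 : 0 ≤ R32)
    (hG1 : R31 + R32 ≤ Cg (h3 ^ 2 * P) - 2)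
    (hG2 : R13 + R23 ≤ Cg (h3 ^ 2 * P) - 2)
    (hG3 : R12 + R13 + R32 ≤ Cg (h2 ^ 2 * P + h3 ^ 2 * P) - 3)
    (hG5 : R12 + R31 + R32 ≤ Cg (h1 ^ 2 * P + h2 ^ 2 * P) - 3)
    (hG7 : R21 + R31 + R23 ≤ Cg ((|h2| + |h3|) ^ 2 * P) - 7 / 2)
    (hG8 : R21 + R31 + R32 ≤ Cg ((|h2| + |h3|) ^ 2 * P) - 7 / 2)
    (a32b a31b a32u a31u a21b a21u a23b a13b a12b : ℝ)
    (ha32b : a32b = ((2:ℝ) ^ (2 * R23 + 1) - 1) / (2 * h3 ^ 2 * P))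
    (ha31b : a31b = (2:ℝ) ^ (2 * R23 + 1) * ((2:ℝ) ^ (2 * R13 + 1) - 1) / (2 * h3 ^ 2 * P))
    (ha32u : a32u = (2:ℝ) ^ (2 * R13 + 2 * R23 + 2) * ((2:ℝ) ^ (2 * (R32 - R23)) - 1) / (h3 ^ 2 * P))
    (ha31u : a31u = (2:ℝ) ^ (2 * R13 + 2 * R32 + 2) * ((2:ℝ) ^ (2 * (R31 - R13)) - 1) / (h3 ^ 2 * P))
    (ha21b : a21b = (2:ℝ) ^ (2 * R32 + 2 * R31 + 2) * ((2:ℝ) ^ (2 * R12 + 1) - 1) / (2 * h2 ^ 2 * P))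
    (ha21u : a21u = (2:ℝ) ^ (2 * R12 + 2 * R31 + 2 * R32 + 3) * ((2:ℝ) ^ (2 * (R21 - R12)) - 1) / (h2 ^ 2 * P))
    (ha23b : a23b = h3 ^ 2 / h2 ^ 2 * a32b)
    (ha13b : a13b = h3 ^ 2 / h1 ^ 2 * a31b)
    (ha12b : a12b = h2 ^ 2 / h1 ^ 2 * a21b) :
    a31b + a32b + a31u + a32u ≤ 1 ∧
    a21b + a23b + a21u ≤ 1 ∧
    a12b + a13b ≤ 1 ∧
    ((2:ℝ) ^ (2 * (R13 + R23)) - 1) / (h3 ^ 2 * P)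
      + (2:ℝ) ^ (2 * (R13 + R23)) * ((2:ℝ) ^ (2 * (R32 - R23 + R12)) - 1) / (h2 ^ 2 * P)
      + (2:ℝ) ^ (2 * (R13 + R32 + R12)) * ((2:ℝ) ^ (2 * (R21 - R12 + R31 - R13)) - 1) / (h1 ^ 2 * P) ≤ 1 := by
  subst ha23b ha13b ha12b ha32b ha31b ha32u ha31u ha21b ha21u
  exact ⟨user3_power_le_one hP hh3 hG1,
    user2_power_le_one hP hh23 hh3 hr21 hr31 hG7 hG8,
    user1_power_le_one hP hh12 hh23 hh3 hr31 hr32 hG2 hG5,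
    relay_power_le_one hP hh12 hh23 hh3 hr12 hr13 hr23 hr32 hG2 hG3 hG8⟩

theorem stmt_18
    (P h1 h2 h3 : ℝ) (hP : 0 < P)
    (hh12 : h2 ^ 2 ≤ h1 ^ 2) (hh23 : h3 ^ 2 ≤ h2 ^ 2) (hh3 : 0 < h3 ^ 2)
    (R12 R13 R21 R23 R31 R32 : ℝ)
    (hr12 : 0 ≤ R12) (hr13 : 0 ≤ R13) (hr21 : 0 ≤ R21)
    (hr23 : 0 ≤ R23) (hr31 : 0 ≤ R31) (hr32 : 0 ≤ R32)
    (hG1 : R31 + R32 ≤ Cg (h3 ^ 2 * P) - 2)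
    (hG2 : R13 + R23 ≤ Cg (h3 ^ 2 * P) - 2)
    (hG3 : R12 + R13 + R32 ≤ Cg (h2 ^ 2 * P + h3 ^ 2 * P) - 3)
    (hG4 : R13 + R23 + R12 ≤ Cg (h2 ^ 2 * P + h3 ^ 2 * P) - 3)
    (hG5 : R12 + R31 + R32 ≤ Cg (h1 ^ 2 * P + h2 ^ 2 * P) - 3)
    (hG6 : R13 + R23 + R21 ≤ Cg (h1 ^ 2 * P + h3 ^ 2 * P) - 3)
    (hG7 : R21 + R31 + R23 ≤ Cg ((|h2| + |h3|) ^ 2 * P) - 7 / 2)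
    (hG8 : R21 + R31 + R32 ≤ Cg ((|h2| + |h3|) ^ 2 * P) - 7 / 2)
    (hc1 : R12 ≤ R21) (hc2 : R13 ≤ R31) (hc3 : R23 ≤ R32)
    (a32b a31b a32u a31u a21b a21u a23b a13b a12b : ℝ)
    (ha32b : a32b = ((2:ℝ) ^ (2 * R23 + 1) - 1) / (2 * h3 ^ 2 * P))
    (ha31b : a31b = (2:ℝ) ^ (2 * R23 + 1) * ((2:ℝ) ^ (2 * R13 + 1) - 1) / (2 * h3 ^ 2 * P))
    (ha32u : a32u = (2:ℝ) ^ (2 * R13 + 2 * R23 + 2) * ((2:ℝ) ^ (2 * (R32 - R23)) - 1) / (h3 ^ 2 * P))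
    (ha31u : a31u = (2:ℝ) ^ (2 * R13 + 2 * R32 + 2) * ((2:ℝ) ^ (2 * (R31 - R13)) - 1) / (h3 ^ 2 * P))
    (ha21b : a21b = (2:ℝ) ^ (2 * R32 + 2 * R31 + 2) * ((2:ℝ) ^ (2 * R12 + 1) - 1) / (2 * h2 ^ 2 * P))
    (ha21u : a21u = (2:ℝ) ^ (2 * R12 + 2 * R31 + 2 * R32 + 3) * ((2:ℝ) ^ (2 * (R21 - R12)) - 1) / (h2 ^ 2 * P))
    (ha23b : a23b = h3 ^ 2 / h2 ^ 2 * a32b)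
    (ha13b : a13b = h3 ^ 2 / h1 ^ 2 * a31b)
    (ha12b : a12b = h2 ^ 2 / h1 ^ 2 * a21b) :
    a31b + a32b + a31u + a32u ≤ 1 ∧
    a21b + a23b + a21u ≤ 1 ∧
    a12b + a13b ≤ 1 ∧
    ((2:ℝ) ^ (2 * (R13 + R23)) - 1) / (h3 ^ 2 * P)
      + (2:ℝ) ^ (2 * (R13 + R23)) * ((2:ℝ) ^ (2 * (R32 - R23 + R12)) - 1) / (h2 ^ 2 * P)
      + (2:ℝ) ^ (2 * (R13 + R32 + R12)) * ((2:ℝ) ^ (2 * (R21 - R12 + R31 - R13)) - 1) / (h1 ^ 2 * P) ≤ 1 :=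
  stmt_18_general P h1 h2 h3 hP hh12 hh23 hh3 R12 R13 R21 R23 R31 R32 hr12 hr13 hr21 hr23 hr31 hr32
    hG1 hG2 hG3 hG5 hG7 hG8 a32b a31b a32u a31u a21b a21u a23b a13b a12b ha32b ha31b ha32u ha31u
    ha21b ha21u ha23b ha13b ha12b
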